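/- arXiv:2112.03983 — 4 statements merged into one kernel-verified Lean document; each statement's English description precedes it below -/
import Mathlib

section
/- If g : F_q^d → Ω is scalar respecting (i.e., g(j·α) = g(α)^j for all j ∈ F_q and α ∈ F_q^d), then every Fourier coefficient ĝ(ρ) := E_{α}[g(α)·conj(χ_ρ(α))] is a real number, where χ_ρ(α) = ω^{ρ·α}. -/
/-! Conjugation inverts the `q`-th roots of unity, and `z⁻¹ = z ^ (-1 : ZMod q).val` for them,
so a scalar-respecting `g` with values in `Ω` satisfies `conj (g α) = g (-α)`; the character
`χ_ρ` satisfies the same identity. Reindexing the Fourier sum by `α ↦ -α` then shows that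
`ĝ(ρ)` equals its own conjugate. -/

open scoped Classical
open Finset Complex

noncomputable def omegaC (q : ℕ) : ℂ := Complex.exp (2 * Real.pi * Complex.I / q)

noncomputable def chiC (q d : ℕ) (ρ α : Fin d → ZMod q) : ℂ :=
  omegaC q ^ (∑ i, ρ i * α i).val

noncomputable def hatC (q d : ℕ) [NeZero q] (g : (Fin d → ZMod q) → ℂ)
    (ρ : Fin d → ZMod q) : ℂ :=
  (∑ α : Fin d → ZMod q, g α * (starRingEnd ℂ) (chiC q d ρ α)) / (q : ℂ) ^ d

open ComplexConjugate

theorem omegaC_pow_self {q : ℕ} (hq : q ≠ 0) : omegaC q ^ q = 1 := by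
  rw [omegaC, ← Complex.exp_nat_mul, mul_div_cancel₀ _ (Nat.cast_ne_zero.2 hq)]
  exact Complex.exp_two_pi_mul_I

theorem conj_eq_pow_val_neg_one {q : ℕ} [NeZero q] {z : ℂ} (hz : z ^ q = 1) :
    conj z = z ^ (-1 : ZMod q).val := by
  have hcong : (((-1 : ZMod q).val + 1 : ℕ) : ZMod q) = ((0 : ℕ) : ZMod q) := by
    push_cast [ZMod.natCast_zmod_val]
    exact neg_add_cancel 1
  have hmul : z ^ (-1 : ZMod q).val * z = 1 := by
    rw [← pow_succ, pow_eq_pow_of_modEq ((ZMod.natCast_eq_natCast_iff _ _ _).1 hcong) hz,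
      pow_zero]
  rw [← Complex.inv_eq_conj (Complex.norm_eq_one_of_pow_eq_one hz (NeZero.ne q)),
    eq_inv_of_mul_eq_one_left hmul]

theorem conj_chiC {q d : ℕ} [NeZero q] (ρ α : Fin d → ZMod q) :
    conj (chiC q d ρ α) = chiC q d ρ (-α) := by
  set s : ZMod q := ∑ i, ρ i * α i with hs
  have hneg : ∑ i, ρ i * (-α) i = -s := by simp [hs, mul_neg]
  have hroot : (omegaC q ^ s.val) ^ q = 1 := by
    rw [pow_right_comm, omegaC_pow_self (NeZero.ne q), one_pow]
  have hcong : ((s.val * (-1 : ZMod q).val : ℕ) : ZMod q) = (((-s).val : ℕ) : ZMod q) := by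
    push_cast [ZMod.natCast_zmod_val]
    ring
  rw [chiC, chiC, hneg, conj_eq_pow_val_neg_one hroot, ← pow_mul]
  exact pow_eq_pow_of_modEq ((ZMod.natCast_eq_natCast_iff _ _ _).1 hcong)
    (omegaC_pow_self (NeZero.ne q))

theorem conj_hatC_of_conj_eq_comp_neg {q d : ℕ} [NeZero q] {g : (Fin d → ZMod q) → ℂ}
    (hg : ∀ α, conj (g α) = g (-α)) (ρ : Fin d → ZMod q) :
    conj (hatC q d g ρ) = hatC q d g ρ := by
  have hterm : ∀ α, conj (g α * conj (chiC q d ρ α)) = g (-α) * conj (chiC q d ρ (-α)) := by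
    intro α
    rw [map_mul, conj_conj, hg, ← conj_chiC, conj_conj]
  rw [hatC, map_div₀, map_sum, map_pow, map_natCast]
  congr 1
  exact Fintype.sum_equiv (Equiv.neg _) _ _ hterm

theorem stmt_1 (q d : ℕ) [Fact q.Prime]
    (g : (Fin d → ZMod q) → ℂ)
    (hΩ : ∀ α, ∃ k : ℕ, g α = omegaC q ^ k)
    (hscal : ∀ (j : ZMod q) (α : Fin d → ZMod q), g (j • α) = g α ^ j.val)
    (ρ : Fin d → ZMod q) :
    (hatC q d g ρ).im = 0 := by
  have hq : q ≠ 0 := (Fact.out : q.Prime).ne_zero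
  have hg : ∀ α, conj (g α) = g (-α) := by
    intro α
    obtain ⟨k, hk⟩ := hΩ α
    have hroot : g α ^ q = 1 := by rw [hk, pow_right_comm, omegaC_pow_self hq, one_pow]
    rw [conj_eq_pow_val_neg_one hroot, ← hscal, neg_one_smul]
  exact Complex.conj_eq_iff_im.1 (conj_hatC_of_conj_eq_comp_neg hg ρ)
end

section
/- For a scalar respecting function g : F_q^d → Ω and any ρ ∈ F_q^d, the probability over uniformly random α ∈ F_q^d that g(α) = χ_ρ(α) equals 1/q + ((q-1)/q)·ĝ(ρ). -/
open scoped Classical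
open Finset Complex

lemma omega_pow_q (q : ℕ) (hq : q ≠ 0) : omegaC q ^ q = 1 := by
  rw [omegaC, ← Complex.exp_nat_mul]
  have hq' : (q : ℂ) ≠ 0 := Nat.cast_ne_zero.mpr hq
  rw [show (q : ℂ) * (2 * Real.pi * Complex.I / q) = 2 * Real.pi * Complex.I by
    field_simp]
  exact Complex.exp_two_pi_mul_I

lemma omega_pow_mod (q : ℕ) (hq : q ≠ 0) (n : ℕ) :
    omegaC q ^ n = omegaC q ^ (n % q) := by
  conv_lhs => rw [← Nat.mod_add_div n q]
  rw [pow_add, pow_mul, omega_pow_q q hq, one_pow, mul_one]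

lemma conj_omega_mul (q : ℕ) : (starRingEnd ℂ) (omegaC q) * omegaC q = 1 := by
  rw [omegaC, ← Complex.exp_conj, ← Complex.exp_add]
  have h : (starRingEnd ℂ) (2 * (Real.pi : ℂ) * Complex.I / q)
      + 2 * (Real.pi : ℂ) * Complex.I / q = 0 := by
    simp only [map_div₀, map_mul, Complex.conj_I, Complex.conj_ofReal, map_ofNat,
      Complex.conj_natCast]
    ring
  rw [h, Complex.exp_zero]

lemma chi_smul (q d : ℕ) [NeZero q] (ρ α : Fin d → ZMod q) (c : ZMod q) :
    chiC q d ρ (c • α) = chiC q d ρ α ^ c.val := by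
  have hs : (∑ i, ρ i * (c • α) i) = c * ∑ i, ρ i * α i := by
    rw [Finset.mul_sum]
    exact Finset.sum_congr rfl fun i _ => by
      simp only [Pi.smul_apply, smul_eq_mul]; ring
  rw [chiC, chiC, hs, ZMod.val_mul, ← omega_pow_mod q (NeZero.ne q), Nat.mul_comm,
    pow_mul]

theorem stmt_2 (q d : ℕ) [Fact q.Prime]
    (g : (Fin d → ZMod q) → ℂ)
    (hΩ : ∀ α, ∃ k : ℕ, g α = omegaC q ^ k)
    (hscal : ∀ (j : ZMod q) (α : Fin d → ZMod q), g (j • α) = g α ^ j.val)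
    (ρ : Fin d → ZMod q) :
    ((Finset.univ.filter fun α : Fin d → ZMod q => g α = chiC q d ρ α).card : ℂ) / (q : ℂ) ^ d
      = 1 / q + ((q : ℂ) - 1) / q * hatC q d g ρ := by
  have hprime : q.Prime := Fact.out
  haveI : NeZero q := ⟨hprime.ne_zero⟩
  have hq : q ≠ 0 := hprime.ne_zero
  set z : (Fin d → ZMod q) → ℂ := fun α => g α * (starRingEnd ℂ) (chiC q d ρ α) with hzdef
  have hωq := omega_pow_q q hq
  have hconj := conj_omega_mul q
  have hchiconj : ∀ α, (starRingEnd ℂ) (chiC q d ρ α) * chiC q d ρ α = 1 := by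
    intro α
    rw [chiC, map_pow, ← mul_pow, hconj, one_pow]
  have hz1 : ∀ α, z α = 1 ↔ g α = chiC q d ρ α := by
    intro α
    constructor
    · intro h
      calc g α = g α * ((starRingEnd ℂ) (chiC q d ρ α) * chiC q d ρ α) := by
            rw [hchiconj α, mul_one]
        _ = z α * chiC q d ρ α := by rw [hzdef]; ring
        _ = chiC q d ρ α := by rw [h, one_mul]
    · intro h
      rw [hzdef]
      simp only
      rw [h, mul_comm, hchiconj]
  have hgq : ∀ α, g α ^ q = 1 := by
    intro α
    obtain ⟨k, hk⟩ := hΩ α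
    rw [hk, ← pow_mul, mul_comm, pow_mul, hωq, one_pow]
  have hchiq : ∀ α, chiC q d ρ α ^ q = 1 := by
    intro α
    rw [chiC, ← pow_mul, mul_comm, pow_mul, hωq, one_pow]
  have hzq : ∀ α, z α ^ q = 1 := by
    intro α
    rw [hzdef]
    simp only
    rw [mul_pow, hgq, ← map_pow, hchiq, map_one, one_mul]
  have hgeom : ∀ α, ∑ j ∈ Finset.range q, z α ^ j
      = if g α = chiC q d ρ α then (q : ℂ) else 0 := by
    intro α
    by_cases h : z α = 1
    · rw [if_pos ((hz1 α).mp h)]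
      simp [h]
    · rw [if_neg (fun hh => h ((hz1 α).mpr hh))]
      rw [geom_sum_eq h, hzq, sub_self, zero_div]
  have hbij : ∀ j, j ∈ Finset.range q → j ≠ 0 →
      ∑ α : Fin d → ZMod q, z α ^ j = ∑ α : Fin d → ZMod q, z α := by
    intro j hj hj0
    have hjlt : j < q := Finset.mem_range.mp hj
    have hc : ((j : ZMod q)) ≠ 0 := by
      rw [Ne, ZMod.natCast_eq_zero_iff]
      intro hdvd
      exact absurd (Nat.le_of_dvd (Nat.pos_of_ne_zero hj0) hdvd) (not_le.mpr hjlt)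
    have hval : ((j : ZMod q)).val = j := ZMod.val_natCast_of_lt hjlt
    have key : ∀ α, z ((j : ZMod q) • α) = z α ^ j := by
      intro α
      rw [hzdef]
      simp only
      rw [hscal, hval, chi_smul q d ρ α (j : ZMod q), hval, map_pow, mul_pow]
    have hbijf : Function.Bijective (fun α : Fin d → ZMod q => (j : ZMod q) • α) := by
      constructor
      · intro a b hab
        have := congrArg (fun x => ((j : ZMod q))⁻¹ • x) hab
        simpa [smul_smul, inv_mul_cancel₀ hc] using this
      · intro b
        exact ⟨((j : ZMod q))⁻¹ • b, by simp [smul_smul, mul_inv_cancel₀ hc]⟩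
    calc ∑ α : Fin d → ZMod q, z α ^ j
        = ∑ α : Fin d → ZMod q, z ((j : ZMod q) • α) :=
          Finset.sum_congr rfl fun α _ => (key α).symm
      _ = ∑ α : Fin d → ZMod q, z α :=
          Fintype.sum_bijective _ hbijf (fun α => z ((j : ZMod q) • α)) z (fun α => rfl)
  -- main counting identity
  have hcard : ((Finset.univ.filter fun α : Fin d → ZMod q => g α = chiC q d ρ α).card : ℂ) * q
      = (q : ℂ) ^ d + ((q : ℂ) - 1) * ∑ α : Fin d → ZMod q, z α := by
    have hS : ∑ α : Fin d → ZMod q, ∑ j ∈ Finset.range q, z α ^ j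
        = ((Finset.univ.filter fun α : Fin d → ZMod q => g α = chiC q d ρ α).card : ℂ) * q := by
      rw [Finset.sum_congr rfl fun α _ => hgeom α]
      rw [Finset.sum_ite, Finset.sum_const, Finset.sum_const_zero, add_zero,
        nsmul_eq_mul]
    obtain ⟨m, hm⟩ : ∃ m, q = m + 1 := ⟨q - 1, (Nat.succ_pred_eq_of_pos hprime.pos).symm⟩
    have hswap : ∑ α : Fin d → ZMod q, ∑ j ∈ Finset.range q, z α ^ j
        = ∑ j ∈ Finset.range q, ∑ α : Fin d → ZMod q, z α ^ j := Finset.sum_comm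
    have hsplit : ∑ j ∈ Finset.range q, ∑ α : Fin d → ZMod q, z α ^ j
        = (q : ℂ) ^ d + ((q : ℂ) - 1) * ∑ α : Fin d → ZMod q, z α := by
      have hrange : Finset.range q = Finset.range (m + 1) := by rw [hm]
      rw [hrange, Finset.sum_range_succ']
      have h0 : ∑ α : Fin d → ZMod q, z α ^ (0 : ℕ) = (q : ℂ) ^ d := by
        simp [Finset.card_univ, ZMod.card]
      have hrest : ∀ j ∈ Finset.range m,
          ∑ α : Fin d → ZMod q, z α ^ (j + 1) = ∑ α : Fin d → ZMod q, z α := by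
        intro j hj
        exact hbij (j + 1) (Finset.mem_range.mpr (by have := Finset.mem_range.mp hj; omega)) (Nat.succ_ne_zero j)
      rw [Finset.sum_congr rfl hrest, Finset.sum_const, nsmul_eq_mul, h0,
        Finset.card_range]
      have : ((m : ℂ)) = (q : ℂ) - 1 := by
        rw [hm]; push_cast; ring
      rw [this]; ring
    rw [← hS, hswap, hsplit]
  have hq0 : (q : ℂ) ≠ 0 := Nat.cast_ne_zero.mpr hq
  have hqd : (q : ℂ) ^ d ≠ 0 := pow_ne_zero d hq0
  have hhat : hatC q d g ρ = (∑ α : Fin d → ZMod q, z α) / (q : ℂ) ^ d := rfl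
  rw [hhat]
  field_simp
  linear_combination hcard
end

section
/- Let A₁, ..., A_ℓ be uniformly random independent matrices in F_q^{k×m}, and define g(b) = (A₁b, ..., A_ℓ b) ∈ F_q^{kℓ}. For any fixed nonzero b ∈ F_q^m, the probability that the relative Hamming weight of g(b) (fraction of nonzero coordinates among all kℓ coordinates) is less than 2/3 is at most C(kℓ, kℓ/3)·q^{-kℓ/3}. -/
set_option maxHeartbeats 1000000


open scoped Classical
open Finset

theorem stmt_7 (q k m ℓ : ℕ) [Fact q.Prime] (h3 : 3 ∣ k * ℓ)
    (b : Fin m → ZMod q) (hb : b ≠ 0) :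
    ((Finset.univ.filter fun A : Fin ℓ → Matrix (Fin k) (Fin m) (ZMod q) =>
        ((Finset.univ.filter fun p : Fin ℓ × Fin k =>
            (A p.1).mulVec b p.2 ≠ 0).card : ℝ) / (k * ℓ) < 2 / 3).card : ℝ)
      / (Fintype.card (Fin ℓ → Matrix (Fin k) (Fin m) (ZMod q)) : ℝ)
    ≤ ((k * ℓ).choose (k * ℓ / 3) : ℝ) * ((q : ℝ) ^ (k * ℓ / 3))⁻¹ := by
  have hq1 : 1 < q := (Fact.out : q.Prime).one_lt
  have hq0 : 0 < q := lt_trans Nat.zero_lt_one hq1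
  obtain ⟨j0, hj0⟩ : ∃ j, b j ≠ 0 := by
    by_contra h; push_neg at h; exact hb (funext h)
  obtain ⟨m', rfl⟩ : ∃ m', m = m' + 1 :=
    ⟨m - 1, (Nat.succ_pred_eq_of_pos j0.pos).symm⟩
  set n := k * ℓ with hn
  set t := n / 3 with ht
  have h3t : 3 * t = n := Nat.mul_div_cancel' h3
  -- the linear functional a ↦ ⟨a, b⟩
  set φ : (Fin (m' + 1) → ZMod q) →+ ZMod q :=
    { toFun := fun a => ∑ j, a j * b j
      map_zero' := by simp
      map_add' := by intro a c; simp [add_mul, Finset.sum_add_distrib] } with hφ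
  have hφsurj : Function.Surjective φ := by
    intro c
    refine ⟨fun i => if i = j0 then c * (b j0)⁻¹ else 0, ?_⟩
    simp only [hφ, AddMonoidHom.coe_mk, ZeroHom.coe_mk, ite_mul, zero_mul,
      Finset.sum_ite_eq' Finset.univ j0, Finset.mem_univ, if_true]
    rw [mul_assoc, inv_mul_cancel₀ hj0, mul_one]
  set Z : Finset (Fin (m' + 1) → ZMod q) := Finset.univ.filter (fun a => φ a = 0) with hZdef
  have hZker : q * Z.card = q ^ (m' + 1) := by
    have h1 : Nat.card ((Fin (m' + 1) → ZMod q) ⧸ φ.ker) = q :=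
      (Nat.card_congr (QuotientAddGroup.quotientKerEquivOfSurjective φ hφsurj).toEquiv).trans
        (by simp [Nat.card_eq_fintype_card, ZMod.card])
    have h2 : Nat.card (Fin (m' + 1) → ZMod q) = q ^ (m' + 1) := by
      simp [Nat.card_eq_fintype_card, ZMod.card]
    have h3' : Nat.card φ.ker = Z.card := by
      rw [Nat.card_eq_fintype_card]
      rw [hZdef]
      rw [← Fintype.card_subtype]
      exact Fintype.card_congr (Equiv.subtypeEquivRight (fun a => (φ.mem_ker).symm)).symm
    have := AddSubgroup.card_eq_card_quotient_mul_card_addSubgroup φ.ker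
    rw [h1, h2, h3'] at this
    omega
  have hZcard : Z.card = q ^ m' := by
    have : q * Z.card = q * q ^ m' := by rw [hZker, pow_succ']
    exact Nat.eq_of_mul_eq_mul_left hq0 this
  have hcoord : ∀ (A : Fin ℓ → Matrix (Fin k) (Fin (m' + 1)) (ZMod q)) (p : Fin ℓ × Fin k),
      (A p.1).mulVec b p.2 = φ (A p.1 p.2) := fun A p => rfl
  -- counting the A's whose coordinates vanish on S
  have hcount : ∀ S : Finset (Fin ℓ × Fin k),
      (Finset.univ.filter fun A : Fin ℓ → Matrix (Fin k) (Fin (m' + 1)) (ZMod q) =>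
        ∀ p ∈ S, (A p.1).mulVec b p.2 = 0).card
      = Z.card ^ S.card * (q ^ (m' + 1)) ^ (ℓ * k - S.card) := by
    intro S
    have hbij : (Finset.univ.filter fun A : Fin ℓ → Matrix (Fin k) (Fin (m' + 1)) (ZMod q) =>
          ∀ p ∈ S, (A p.1).mulVec b p.2 = 0).card
        = (Finset.univ.filter fun f : Fin ℓ × Fin k → (Fin (m' + 1) → ZMod q) =>
          ∀ p ∈ S, φ (f p) = 0).card := by
      apply Finset.card_bij (fun A _ => fun p => A p.1 p.2)
      · intro A hA
        simp only [Finset.mem_filter, Finset.mem_univ, true_and] at hA ⊢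
        intro p hp
        rw [← hcoord A p]; exact hA p hp
      · intro A₁ h₁ A₂ h₂ h
        funext i j c
        exact congrFun (congrFun h (i, j)) c
      · intro f hf
        refine ⟨fun i j c => f (i, j) c, ?_, rfl⟩
        simp only [Finset.mem_filter, Finset.mem_univ, true_and] at hf ⊢
        refine Finset.mem_filter.mpr ⟨Finset.mem_univ _, ?_⟩
        intro p hp
        show φ (f p) = 0
        exact hf p hp
    rw [hbij]
    have hpi : (Finset.univ.filter fun f : Fin ℓ × Fin k → (Fin (m' + 1) → ZMod q) =>
          ∀ p ∈ S, φ (f p) = 0)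
        = Fintype.piFinset (fun p => if p ∈ S then Z else Finset.univ) := by
      ext f
      simp only [Finset.mem_filter, Finset.mem_univ, true_and, Fintype.mem_piFinset, hZdef]
      constructor
      · intro h p
        by_cases hp : p ∈ S <;> simp [hp, h p]
      · intro h p hp
        have := h p
        simp [hp] at this
        exact this
    rw [hpi, Fintype.card_piFinset]
    have : ∀ p : Fin ℓ × Fin k, ((if p ∈ S then Z else Finset.univ).card)
        = (if p ∈ S then Z.card else q ^ (m' + 1)) := by
      intro p; split <;> simp [ZMod.card]
    simp only [this]
    rw [← Finset.prod_mul_prod_compl S]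
    rw [Finset.prod_congr rfl (fun p hp => if_pos hp),
      Finset.prod_congr rfl (fun p hp => if_neg (Finset.mem_compl.mp hp)),
      Finset.prod_const, Finset.prod_const, Finset.card_compl]
    simp [Finset.card_univ]
  -- the event is contained in the union over S of size t
  set E := (Finset.univ.filter fun A : Fin ℓ → Matrix (Fin k) (Fin (m' + 1)) (ZMod q) =>
      ((Finset.univ.filter fun p : Fin ℓ × Fin k =>
          (A p.1).mulVec b p.2 ≠ 0).card : ℝ) / (k * ℓ) < 2 / 3) with hE
  have hsubset : E ⊆ (Finset.powersetCard t (Finset.univ : Finset (Fin ℓ × Fin k))).biUnion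
      (fun S => Finset.univ.filter fun A => ∀ p ∈ S, (A p.1).mulVec b p.2 = 0) := by
    intro A hA
    rw [hE, Finset.mem_filter] at hA
    obtain ⟨-, hlt⟩ := hA
    set nz := (Finset.univ.filter fun p : Fin ℓ × Fin k => (A p.1).mulVec b p.2 ≠ 0).card with hnz
    set zf := Finset.univ.filter fun p : Fin ℓ × Fin k => (A p.1).mulVec b p.2 = 0 with hzf
    have hcompl : (Finset.univ.filter fun p : Fin ℓ × Fin k => (A p.1).mulVec b p.2 ≠ 0) = zfᶜ := by
      ext p; simp [hzf]
    have hsum : zf.card + nz = n := by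
      rw [hnz, hcompl, Finset.card_add_card_compl, hn, Fintype.card_prod,
        Fintype.card_fin, Fintype.card_fin, Nat.mul_comm]
    have htz : t ≤ zf.card := by
      rcases Nat.eq_zero_or_pos n with h0 | hpos
      · omega
      · have hklpos : 0 < k * ℓ := hn ▸ hpos
        have hn0R : (0 : ℝ) < (k : ℝ) * (ℓ : ℝ) := by
          have : (0 : ℝ) < ((k * ℓ : ℕ) : ℝ) := by exact_mod_cast hklpos
          push_cast at this; exact this
        rw [div_lt_iff₀ hn0R] at hlt
        have h3nz : 3 * nz < 2 * n := by
          have : (3 * nz : ℝ) < 2 * n := by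
            have hcast : ((n : ℕ) : ℝ) = (k : ℝ) * (ℓ : ℝ) := by rw [hn]; push_cast; ring
            nlinarith [hlt]
          exact_mod_cast this
        omega
    obtain ⟨S, hSsub, hScard⟩ := Finset.exists_subset_card_eq htz
    rw [Finset.mem_biUnion]
    refine ⟨S, ?_, ?_⟩
    · rw [Finset.mem_powersetCard]
      exact ⟨Finset.subset_univ _, hScard⟩
    · rw [Finset.mem_filter]
      refine ⟨Finset.mem_univ _, fun p hp => ?_⟩
      have := hSsub hp
      rw [hzf, Finset.mem_filter] at this
      exact this.2
  -- count the union
  have hEcard : E.card ≤ n.choose t * (Z.card ^ t * (q ^ (m' + 1)) ^ (n - t)) := by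
    have hstep : E.card ≤ ∑ S ∈ Finset.powersetCard t (Finset.univ : Finset (Fin ℓ × Fin k)),
        (Finset.univ.filter fun A : Fin ℓ → Matrix (Fin k) (Fin (m' + 1)) (ZMod q) =>
          ∀ p ∈ S, (A p.1).mulVec b p.2 = 0).card :=
      le_trans (Finset.card_le_card hsubset) Finset.card_biUnion_le
    have hlk : ℓ * k = n := by rw [hn, Nat.mul_comm]
    have hsum2 : ∑ S ∈ Finset.powersetCard t (Finset.univ : Finset (Fin ℓ × Fin k)),
        (Finset.univ.filter fun A : Fin ℓ → Matrix (Fin k) (Fin (m' + 1)) (ZMod q) =>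
          ∀ p ∈ S, (A p.1).mulVec b p.2 = 0).card
        = ∑ _S ∈ Finset.powersetCard t (Finset.univ : Finset (Fin ℓ × Fin k)),
          (Z.card ^ t * (q ^ (m' + 1)) ^ (n - t)) := by
      refine Finset.sum_congr rfl (fun S hS => ?_)
      have hSc := (Finset.mem_powersetCard.mp hS).2
      rw [hcount S, hSc, hlk]
    refine le_trans hstep (le_of_eq ?_)
    rw [hsum2, Finset.sum_const, Finset.card_powersetCard, Finset.card_univ,
      Fintype.card_prod, Fintype.card_fin, Fintype.card_fin, hlk, smul_eq_mul]
  set N := Fintype.card (Fin ℓ → Matrix (Fin k) (Fin (m' + 1)) (ZMod q)) with hNdef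
  have hNval : N = q ^ ((m' + 1) * n) := by
    rw [hNdef, Fintype.card_fun,
      Fintype.card_congr (Matrix.of.symm : Matrix (Fin k) (Fin (m' + 1)) (ZMod q) ≃ _)]
    simp only [Fintype.card_fun, ZMod.card, Fintype.card_fin]
    rw [hn, ← pow_mul, ← pow_mul]
  have hKN : (Z.card ^ t * (q ^ (m' + 1)) ^ (n - t)) * q ^ t = N := by
    rw [hZcard, hNval, ← pow_mul, ← pow_mul, ← pow_add, ← pow_add]
    congr 1
    have h2t : n - t = 2 * t := by omega
    rw [h2t, ← h3t]; ring
  have hkey : E.card * q ^ t ≤ n.choose t * N :=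
    calc E.card * q ^ t
        ≤ (n.choose t * (Z.card ^ t * (q ^ (m' + 1)) ^ (n - t))) * q ^ t :=
          Nat.mul_le_mul_right _ hEcard
      _ = n.choose t * N := by rw [mul_assoc, hKN]
  have hN' : (0 : ℝ) < (N : ℝ) := by exact_mod_cast Fintype.card_pos
  have hqR : (0 : ℝ) < (q : ℝ) := by exact_mod_cast hq0
  have hq' : (0 : ℝ) < (q : ℝ) ^ t := by positivity
  rw [← div_eq_mul_inv, div_le_div_iff₀ hN' hq']
  exact_mod_cast hkey
end

section
/- Let u : (F_q^k \ {0}) → F_q^m be a function such that for all linearly independent α, β ∈ F_q^k, we have u(α) + u(β) = 2·u(α+β). Suppose q ≥ 5 and k ≥ 2. Then u is constant on F_q^k \ {0}. -/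
/-!
For linearly independent `α, β` the pairs `(α + β, β)`, `(α, α + β)`, `(2α + β, β)` and
`(α, α + 2β)` are again independent (this is where `2 ≠ 0` is needed), and the four resulting
instances of the hypothesis combine to `u β - u α = 2 (u β - u α)`, so `u α = u β`.
Any two nonzero vectors are then linked through a third vector independent of both.
-/

section

variable {K V W : Type*} [Field K] [AddCommGroup V] [Module K V] [AddCommGroup W]

theorem apply_eq_apply_of_linearIndependent {u : V → W}
    (hu : ∀ α β : V, LinearIndependent K ![α, β] → u α + u β = 2 • u (α + β))
    (h2 : (2 : K) ≠ 0) {α β : V} (hαβ : LinearIndependent K ![α, β]) : u α = u β := by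
  have hcomb (a b c d : K) (hdet : a * d ≠ b * c) :
      u (a • α + b • β) + u (c • α + d • β) =
        2 • u ((a + c) • α + (b + d) • β) := by
    rw [show (a + c) • α + (b + d) • β = (a • α + b • β) + (c • α + d • β) by
      module]
    exact hu _ _ (LinearIndependent.pair_add_smul_add_smul_iff a b c d |>.mpr ⟨hαβ, hdet⟩)
  have e₁ := hcomb 1 1 0 1 (by norm_num)
  have e₂ := hcomb 1 0 1 1 (by norm_num)
  have e₃ := hcomb 2 1 0 1 (by simpa using h2)
  have e₄ := hcomb 1 0 1 2 (by simpa using h2)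
  norm_num at e₁ e₂ e₃ e₄
  linear_combination (norm := module) e₁ - e₂ - 2 • e₃ + 2 • e₄

theorem exists_common_linearIndependent_pair (hV : 1 < Module.rank K V) {α β : V}
    (hα : α ≠ 0) (hβ : β ≠ 0) :
    ∃ γ, LinearIndependent K ![α, γ] ∧ LinearIndependent K ![β, γ] := by
  by_cases hαβ : LinearIndependent K ![α, β]
  · refine ⟨α + β, LinearIndependent.pair_add_right_iff.mpr hαβ, ?_⟩
    rw [add_comm, LinearIndependent.pair_add_right_iff, LinearIndependent.pair_symm_iff]
    exact hαβ
  · obtain ⟨a, rfl⟩ : ∃ a : K, a • α = β := by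
      simpa [LinearIndependent.pair_iff' hα] using hαβ
    obtain ⟨γ, hγ⟩ := exists_linearIndependent_pair_of_one_lt_rank hV hα
    refine ⟨γ, hγ, ?_⟩
    have ha : a ≠ 0 := by rintro rfl; simp at hβ
    simpa using
      (LinearIndependent.pair_smul_smul_iff (isUnit_iff_ne_zero.mpr ha) isUnit_one).mpr hγ

theorem apply_eq_apply_of_ne_zero {u : V → W}
    (hu : ∀ α β : V, LinearIndependent K ![α, β] → u α + u β = 2 • u (α + β))
    (h2 : (2 : K) ≠ 0) (hV : 1 < Module.rank K V) {α β : V} (hα : α ≠ 0) (hβ : β ≠ 0) :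
    u α = u β := by
  obtain ⟨γ, hαγ, hβγ⟩ := exists_common_linearIndependent_pair hV hα hβ
  rw [apply_eq_apply_of_linearIndependent hu h2 hαγ,
    apply_eq_apply_of_linearIndependent hu h2 hβγ]

end

theorem stmt_13 (q k m : ℕ) [Fact q.Prime] (hq : 5 ≤ q) (hk : 2 ≤ k)
    (u : (Fin k → ZMod q) → Fin m → ZMod q)
    (h : ∀ α β : Fin k → ZMod q, LinearIndependent (ZMod q) ![α, β] →
      u α + u β = 2 • u (α + β)) :
    ∀ α β : Fin k → ZMod q, α ≠ 0 → β ≠ 0 → u α = u β := by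
  intro α β hα hβ
  have h2 : (2 : ZMod q) ≠ 0 := Ring.two_ne_zero (by rw [ZMod.ringChar_zmod_n]; omega)
  have hrank : 1 < Module.rank (ZMod q) (Fin k → ZMod q) := by
    rw [rank_fin_fun]; exact_mod_cast hk
  exact apply_eq_apply_of_ne_zero h h2 hrank hα hβ
end
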